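/- arXiv:1111.6664 — 3 statements merged into one kernel-verified Lean document; each statement's English description precedes it below -/
import Mathlib

section
/- Let I₁, I₂ ⊂ {1,…,n} be disjoint index sets. If Φ satisfies the RIP of order |I₁|+|I₂| with constant δ_{|I₁|+|I₂|} < 1, then for any vector u ∈ ℝⁿ supported on I₂, ‖Φ_{I₁}' Φ_{I₂} u_{I₂}‖₂ ≤ δ_{|I₁|+|I₂|} ‖u‖₂. -/
open Matrix

/-- A vector is K-sparse if it has at most K nonzero entries. -/
def IsSparse {n : ℕ} (K : ℕ) (x : Fin n → ℝ) : Prop :=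
  (Finset.univ.filter fun i => x i ≠ 0).card ≤ K

/-- The Euclidean (ℓ₂) norm of a finitely-indexed real vector. -/
noncomputable def l2norm {ι : Type*} [Fintype ι] (v : ι → ℝ) : ℝ :=
  Real.sqrt (∑ i, v i ^ 2)

/-- Φ satisfies the RIP of order K with constant δ. -/
def SatisfiesRIP {m n : ℕ} (Φ : Matrix (Fin m) (Fin n) ℝ) (K : ℕ) (δ : ℝ) : Prop :=
  ∀ x : Fin n → ℝ, IsSparse K x →
    (1 - δ) * l2norm x ^ 2 ≤ l2norm (Φ.mulVec x) ^ 2 ∧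
    l2norm (Φ.mulVec x) ^ 2 ≤ (1 + δ) * l2norm x ^ 2

/-- The column-submatrix of Φ consisting of columns indexed by I. -/
def colSub {m n : ℕ} (Φ : Matrix (Fin m) (Fin n) ℝ) (I : Finset (Fin n)) :
    Matrix (Fin m) I ℝ :=
  fun i j => Φ i (j : Fin n)

/-!
Polarization turns the RIP into a bound on correlations: for `x`, `y` supported on disjoint
sets, `x ± y` are sparse with `‖x ± y‖² = ‖x‖² + ‖y‖²`, so
`4 ⟪Φx, Φy⟫ = ‖Φ(x + y)‖² - ‖Φ(x - y)‖² ≤ 2δ (‖x‖² + ‖y‖²)`, and rescaling `x`, `y` gives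
`⟪Φx, Φy⟫ ≤ δ ‖x‖ ‖y‖`. With `w = Φ_{I₁}ᵀ Φ_{I₂} u_{I₂}` and `x` the extension of `w` by zero,
`‖w‖² = ⟪Φx, Φu⟫ ≤ δ ‖w‖ ‖u‖`.
-/

section FiniteVectors

variable {ι : Type*} [Fintype ι]

lemma dotProduct_eq_zero_of_disjoint {R : Type*} [NonUnitalNonAssocSemiring R]
    {s t : Finset ι} (hst : Disjoint s t) {x y : ι → R}
    (hx : ∀ i ∉ s, x i = 0) (hy : ∀ i ∉ t, y i = 0) : x ⬝ᵥ y = 0 :=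
  Finset.sum_eq_zero fun i _ => by
    by_cases hi : i ∈ s
    · rw [hy i (Finset.disjoint_left.mp hst hi), mul_zero]
    · rw [hx i hi, zero_mul]

lemma dotProduct_eq_dotProduct_restrict {R : Type*} [NonUnitalNonAssocSemiring R]
    {I : Finset ι} {v : ι → R} (hv : ∀ i ∉ I, v i = 0) (z : ι → R) :
    v ⬝ᵥ z = (fun i : I => v i) ⬝ᵥ fun i : I => z i := by
  rw [dotProduct, dotProduct, Finset.sum_coe_sort I fun i => v i * z i]
  exact (Finset.sum_subset I.subset_univ fun i _ hi => by rw [hv i hi, zero_mul]).symm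

lemma l2norm_eq_sqrt_dotProduct (v : ι → ℝ) : l2norm v = √(v ⬝ᵥ v) := by
  simp only [l2norm, dotProduct, sq]

lemma l2norm_nonneg (v : ι → ℝ) : 0 ≤ l2norm v :=
  Real.sqrt_nonneg _

lemma l2norm_sq (v : ι → ℝ) : l2norm v ^ 2 = v ⬝ᵥ v := by
  rw [l2norm_eq_sqrt_dotProduct]
  exact Real.sq_sqrt (Finset.sum_nonneg fun i _ => mul_self_nonneg (v i))

lemma l2norm_eq_zero {v : ι → ℝ} : l2norm v = 0 ↔ v = 0 := by
  rw [← sq_eq_zero_iff, l2norm_sq, dotProduct_self_eq_zero]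

lemma l2norm_eq_l2norm_restrict {I : Finset ι} {v : ι → ℝ} (hv : ∀ i ∉ I, v i = 0) :
    l2norm v = l2norm fun i : I => v i := by
  rw [l2norm_eq_sqrt_dotProduct, l2norm_eq_sqrt_dotProduct,
    dotProduct_eq_dotProduct_restrict hv]

end FiniteVectors

lemma mulVec_eq_colSub_mulVec {m n : ℕ} (Φ : Matrix (Fin m) (Fin n) ℝ) {I : Finset (Fin n)}
    {u : Fin n → ℝ} (hu : ∀ i ∉ I, u i = 0) : Φ *ᵥ u = colSub Φ I *ᵥ fun j : I => u j := by
  ext r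
  rw [mulVec, mulVec, dotProduct_comm, dotProduct_eq_dotProduct_restrict hu, dotProduct_comm]
  rfl

lemma isSparse_of_support_subset {n K : ℕ} {x : Fin n → ℝ} (s : Finset (Fin n))
    (hs : s.card ≤ K) (hx : ∀ i ∉ s, x i = 0) : IsSparse K x := by
  refine le_trans (Finset.card_le_card fun i hi => ?_) hs
  by_contra his
  exact (Finset.mem_filter.mp hi).2 (hx i his)

namespace SatisfiesRIP

variable {m n : ℕ} {Φ : Matrix (Fin m) (Fin n) ℝ} {s t : Finset (Fin n)} {δ : ℝ}
  {x y : Fin n → ℝ}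

theorem two_mul_dotProduct_mulVec_le (hRIP : SatisfiesRIP Φ (s.card + t.card) δ)
    (hst : Disjoint s t) (hx : ∀ i ∉ s, x i = 0) (hy : ∀ i ∉ t, y i = 0) :
    2 * (Φ *ᵥ x ⬝ᵥ Φ *ᵥ y) ≤ δ * (x ⬝ᵥ x + y ⬝ᵥ y) := by
  have hxy : x ⬝ᵥ y = 0 := dotProduct_eq_zero_of_disjoint hst hx hy
  have hsparse : ∀ z : Fin n → ℝ, (∀ i, z i = x i + y i ∨ z i = x i - y i) →
      IsSparse (s.card + t.card) z := fun z hz =>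
    isSparse_of_support_subset (s ∪ t) (Finset.card_union_le s t) fun i hi => by
      rw [Finset.mem_union, not_or] at hi
      rcases hz i with h | h <;> rw [h, hx i hi.1, hy i hi.2] <;> ring
  have hupper := (hRIP (x + y) (hsparse _ fun i => Or.inl rfl)).2
  have hlower := (hRIP (x - y) (hsparse _ fun i => Or.inr rfl)).1
  simp only [l2norm_sq, mulVec_add, mulVec_sub, add_dotProduct, dotProduct_add, sub_dotProduct,
    dotProduct_sub, dotProduct_comm y x, dotProduct_comm (Φ *ᵥ y) (Φ *ᵥ x), hxy] at hupper hlower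
  linarith

theorem dotProduct_mulVec_le (hRIP : SatisfiesRIP Φ (s.card + t.card) δ)
    (hst : Disjoint s t) (hx : ∀ i ∉ s, x i = 0) (hy : ∀ i ∉ t, y i = 0) :
    Φ *ᵥ x ⬝ᵥ Φ *ᵥ y ≤ δ * l2norm x * l2norm y := by
  rcases (mul_nonneg (l2norm_nonneg x) (l2norm_nonneg y)).eq_or_lt with hxy | hxy
  · rw [mul_assoc, ← hxy, mul_zero]
    rcases mul_eq_zero.mp hxy.symm with h | h <;> simp [l2norm_eq_zero.mp h]
  -- apply the polarization bound to `‖y‖ • x` and `‖x‖ • y`, which have equal norms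
  have h := hRIP.two_mul_dotProduct_mulVec_le hst (x := l2norm y • x) (y := l2norm x • y)
    (fun i hi => by simp [hx i hi]) (fun i hi => by simp [hy i hi])
  simp only [mulVec_smul, smul_dotProduct, dotProduct_smul, smul_eq_mul, ← l2norm_sq] at h
  refine le_of_mul_le_mul_left ?_ hxy
  linear_combination h / 2

end SatisfiesRIP

theorem disjoint_correlation_bound_general {m n : ℕ} (Φ : Matrix (Fin m) (Fin n) ℝ)
    (I₁ I₂ : Finset (Fin n)) (hdisj : Disjoint I₁ I₂) (δ : ℝ) (hδ0 : 0 ≤ δ)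
    (hRIP : SatisfiesRIP Φ (I₁.card + I₂.card) δ)
    (u : Fin n → ℝ) (hsupp : ∀ i, i ∉ I₂ → u i = 0) :
    l2norm ((colSub Φ I₁)ᵀ.mulVec ((colSub Φ I₂).mulVec fun j : I₂ => u j)) ≤
      δ * l2norm u := by
  set w := (colSub Φ I₁)ᵀ *ᵥ (colSub Φ I₂ *ᵥ fun j : I₂ => u j)
  set x : Fin n → ℝ := Function.extend Subtype.val w 0
  have hx : ∀ i ∉ I₁, x i = 0 := fun i hi =>
    Function.extend_apply' _ _ _ fun ⟨j, hj⟩ => hi (hj ▸ j.2)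
  have hx_restrict : (fun i : I₁ => x i) = w :=
    funext fun i => Subtype.val_injective.extend_apply _ _ _
  have hx_norm : l2norm x = l2norm w := by
    rw [l2norm_eq_l2norm_restrict hx, hx_restrict]
  have hw_sq : l2norm w ^ 2 = Φ *ᵥ x ⬝ᵥ Φ *ᵥ u := by
    rw [l2norm_sq, mulVec_eq_colSub_mulVec Φ hx, mulVec_eq_colSub_mulVec Φ hsupp, hx_restrict,
      dotProduct_mulVec, vecMul_transpose]
  have hcorr := hRIP.dotProduct_mulVec_le hdisj hx hsupp
  rw [← hw_sq, hx_norm] at hcorr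
  nlinarith [l2norm_nonneg w, mul_nonneg hδ0 (l2norm_nonneg u)]

theorem disjoint_correlation_bound {m n : ℕ} (Φ : Matrix (Fin m) (Fin n) ℝ)
    (I₁ I₂ : Finset (Fin n)) (hdisj : Disjoint I₁ I₂) (δ : ℝ) (hδ0 : 0 ≤ δ) (hδ1 : δ < 1)
    (hRIP : SatisfiesRIP Φ (I₁.card + I₂.card) δ)
    (u : Fin n → ℝ) (hsupp : ∀ i, i ∉ I₂ → u i = 0) :
    l2norm ((colSub Φ I₁)ᵀ.mulVec ((colSub Φ I₂).mulVec fun j : I₂ => u j)) ≤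
      δ * l2norm u :=
  disjoint_correlation_bound_general Φ I₁ I₂ hdisj δ hδ0 hRIP u hsupp
end

section
/- Suppose x is 1-sparse with nonzero entry at index u and y = Φx. If Φ satisfies the RIP of order 2 with δ₂ < 1/2, then |⟨φ_u, y⟩| > |⟨φ_i, y⟩| for every i ≠ u, so the index of largest correlation is the true support index. -/
open Matrix

/-! Since `x = x_u eᵤ`, the correlations are `(Φᵀ y)ⱼ = x_u ⟪φⱼ, φᵤ⟫`. The RIP applied to `eᵤ`
gives `‖φᵤ‖² ≥ 1 - δ`; applied to `eᵢ ± eᵤ` it bounds `‖φᵢ ± φᵤ‖²` within `[2(1 - δ), 2(1 + δ)]`,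
so by polarization `|⟪φᵢ, φᵤ⟫| ≤ δ`. Finally `δ < 1 - δ` because `δ < 1/2`. -/

lemma l2norm_sq_eq_dotProduct {ι : Type*} [Fintype ι] (v : ι → ℝ) : l2norm v ^ 2 = v ⬝ᵥ v := by
  rw [l2norm, Real.sq_sqrt (Finset.sum_nonneg fun i _ => sq_nonneg (v i))]
  simp only [dotProduct, sq]

lemma isSparse_of_ne_zero_mem {n K : ℕ} {x : Fin n → ℝ} (s : Finset (Fin n)) (hs : s.card ≤ K)
    (hx : ∀ i, x i ≠ 0 → i ∈ s) : IsSparse K x :=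
  (Finset.card_le_card fun i hi => hx i (Finset.mem_filter.1 hi).2).trans hs

lemma isSparse_single_add_single {n : ℕ} (i j : Fin n) (a b : ℝ) :
    IsSparse 2 (Pi.single i a + Pi.single j b) := by
  refine isSparse_of_ne_zero_mem {i, j} (Finset.card_le_two) fun k hk => ?_
  by_contra hkij
  simp only [Finset.mem_insert, Finset.mem_singleton, not_or] at hkij
  simp [hkij.1, hkij.2] at hk

namespace SatisfiesRIP

variable {m n K : ℕ} {Φ : Matrix (Fin m) (Fin n) ℝ} {δ : ℝ}

lemma dotProduct_bounds (hRIP : SatisfiesRIP Φ K δ) {v : Fin n → ℝ} (hv : IsSparse K v) :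
    (1 - δ) * (v ⬝ᵥ v) ≤ Φ *ᵥ v ⬝ᵥ Φ *ᵥ v ∧ Φ *ᵥ v ⬝ᵥ Φ *ᵥ v ≤ (1 + δ) * (v ⬝ᵥ v) := by
  simpa only [l2norm_sq_eq_dotProduct] using hRIP v hv

lemma one_sub_le_col_dotProduct_self (hRIP : SatisfiesRIP Φ 2 δ) (j : Fin n) :
    1 - δ ≤ Φ.col j ⬝ᵥ Φ.col j := by
  have h := (hRIP.dotProduct_bounds (v := Pi.single j 1)
    (by simpa using isSparse_single_add_single j j 1 0)).1
  simpa [mulVec_single_one] using h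

lemma abs_col_dotProduct_le (hRIP : SatisfiesRIP Φ 2 δ) {i j : Fin n} (hij : i ≠ j) :
    |Φ.col i ⬝ᵥ Φ.col j| ≤ δ := by
  have hplus := hRIP.dotProduct_bounds (isSparse_single_add_single i j 1 1)
  have hminus := hRIP.dotProduct_bounds (isSparse_single_add_single i j 1 (-1))
  simp only [mulVec_add, mulVec_single_one, Pi.single_neg, mulVec_neg, dotProduct_add,
    add_dotProduct, dotProduct_neg, neg_dotProduct, dotProduct_comm (Φ.col j), dotProduct_single,
    Pi.add_apply, Pi.neg_apply, Pi.single_eq_same, Pi.single_eq_of_ne hij,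
    Pi.single_eq_of_ne hij.symm] at hplus hminus
  rw [abs_le]
  constructor <;> linarith

end SatisfiesRIP

lemma eq_single_of_forall_ne_eq_zero {n : ℕ} {x : Fin n → ℝ} {u : Fin n}
    (hx : ∀ i, i ≠ u → x i = 0) : x = Pi.single u (x u) := by
  funext i
  by_cases hiu : i = u
  · subst hiu; simp
  · simp [hiu, hx i hiu]

lemma transpose_mulVec_mulVec_single_apply {m n : ℕ} (Φ : Matrix (Fin m) (Fin n) ℝ)
    (u j : Fin n) (c : ℝ) : (Φᵀ *ᵥ (Φ *ᵥ Pi.single u c)) j = c * (Φ.col j ⬝ᵥ Φ.col u) := by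
  have hc : Pi.single u c = c • Pi.single u (1 : ℝ) := by
    rw [← Pi.single_smul', smul_eq_mul, mul_one]
  rw [hc, mulVec_smul, mulVec_single_one, mulVec_smul]
  rfl

theorem omp_one_sparse_recovery {m n : ℕ} (Φ : Matrix (Fin m) (Fin n) ℝ)
    (x : Fin n → ℝ) (u : Fin n) (hu : x u ≠ 0) (hsupp : ∀ i, i ≠ u → x i = 0)
    (y : Fin m → ℝ) (hy : y = Φ.mulVec x)
    (δ : ℝ) (hRIP : SatisfiesRIP Φ 2 δ) (hδ : δ < 1 / 2) :
    ∀ i, i ≠ u → |Φᵀ.mulVec y i| < |Φᵀ.mulVec y u| := by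
  intro i hiu
  subst hy
  rw [eq_single_of_forall_ne_eq_zero hsupp, transpose_mulVec_mulVec_single_apply,
    transpose_mulVec_mulVec_single_apply, abs_mul, abs_mul]
  refine mul_lt_mul_of_pos_left ?_ (abs_pos.2 hu)
  calc |Φ.col i ⬝ᵥ Φ.col u| ≤ δ := hRIP.abs_col_dotProduct_le hiu
    _ < 1 - δ := by linarith
    _ ≤ Φ.col u ⬝ᵥ Φ.col u := hRIP.one_sub_le_col_dotProduct_self u
    _ ≤ |Φ.col u ⬝ᵥ Φ.col u| := le_abs_self _
end

section
/- Let x be K-sparse with support T, let Λᵏ with |Λᵏ| = Nk and |T ∩ Λᵏ| = l < K, and let rᵏ = P_{Λᵏ}^⊥ Φx. Let β₁ = max_{j ∈ T\Λᵏ} |⟨φ_j, rᵏ⟩|. Then β₁ ≥ (1 - δ_{K-l} - (1+δ_{Nk})/(1-δ_{Nk})² · δ_{Nk+K-l}²) · ‖x_{T\Λᵏ}‖₂ / √(K-l), provided the RIP constants appearing are less than 1. -/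
/-!
Split `x = x₁ + x_Λ` with `x₁` the part of `x` on `T \ Λ`. The projection `P` onto the span of
the columns `A = Φ_Λ` fixes `Φ x_Λ`, so `r = Φx₁ - PΦx₁` and `‖Φx₁‖² = ‖r‖² + ‖PΦx₁‖²`, while
`‖Φx₁‖² ≥ (1 - δ_{K-l}) ‖x₁‖²`. Writing `PΦx₁ = A u` with `AᵀA u = AᵀΦx₁`, near-orthogonality of
disjointly supported vectors under the RIP gives `‖AᵀΦx₁‖ ≤ δ_{Nk+K-l} ‖x₁‖`, and the RIP on `Λ`
gives `(1 - δ_{Nk}) ‖u‖ ≤ ‖AᵀA u‖` and `‖A u‖² ≤ (1 + δ_{Nk}) ‖u‖²`. Finally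
`‖r‖² = ⟨x₁, Φᵀr⟩ ≤ β₁ ‖x₁‖₁ ≤ β₁ √(K - l) ‖x₁‖`; divide by `‖x₁‖`.
-/

open Matrix

section L2Norm

variable {ι : Type*} [Fintype ι]

@[simp]
lemma l2norm_zero : l2norm (0 : ι → ℝ) = 0 := by simp [l2norm]

lemma dotProduct_le_l2norm_mul_l2norm (v w : ι → ℝ) : v ⬝ᵥ w ≤ l2norm v * l2norm w :=
  Real.sum_mul_le_sqrt_mul_sqrt _ v w

end L2Norm

section ZeroExtension

variable {ι : Type*} [DecidableEq ι] (S : Finset ι)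

def extendByZero (u : S → ℝ) : ι → ℝ := fun i => if h : i ∈ S then u ⟨i, h⟩ else 0

variable {S}

lemma extendByZero_of_notMem (u : S → ℝ) {i : ι} (hi : i ∉ S) : extendByZero S u i = 0 :=
  dif_neg hi

@[simp]
lemma extendByZero_coe (u : S → ℝ) (j : S) : extendByZero S u j = u j :=
  dif_pos j.2

lemma restrict_extendByZero (u : S → ℝ) : S.restrict (extendByZero S u) = u :=
  funext (extendByZero_coe u)

lemma extendByZero_dotProduct [Fintype ι] (u : S → ℝ) (w : ι → ℝ) :
    extendByZero S u ⬝ᵥ w = u ⬝ᵥ S.restrict w := by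
  rw [dotProduct, ← Finset.sum_subset (Finset.subset_univ S)
      (fun i _ hi => by rw [extendByZero_of_notMem u hi, zero_mul]),
    ← Finset.sum_coe_sort]
  simp [dotProduct]

lemma extendByZero_dotProduct_self [Fintype ι] (u : S → ℝ) :
    extendByZero S u ⬝ᵥ extendByZero S u = u ⬝ᵥ u := by
  rw [extendByZero_dotProduct, restrict_extendByZero]

lemma l2norm_extendByZero [Fintype ι] (u : S → ℝ) : l2norm (extendByZero S u) = l2norm u := by
  rw [l2norm_eq_sqrt_dotProduct, l2norm_eq_sqrt_dotProduct, extendByZero_dotProduct_self]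

lemma extendByZero_restrict_sdiff_add_extendByZero_restrict {T : Finset ι} {x : ι → ℝ}
    (hx : ∀ i ∉ T, x i = 0) :
    extendByZero (T \ S) ((T \ S).restrict x) + extendByZero S (S.restrict x) = x := by
  funext i
  by_cases hS : i ∈ S
  · simp [extendByZero, hS]
  · by_cases hT : i ∈ T
    · simp [extendByZero, hS, hT]
    · simp [extendByZero, hS, hT, hx i hT]

lemma extendByZero_dotProduct_le [Fintype ι] {z : ι → ℝ} {β : ℝ} (hβ : 0 ≤ β)
    (hz : ∀ i ∈ S, |z i| ≤ β) (u : S → ℝ) : extendByZero S u ⬝ᵥ z ≤ β * √S.card * l2norm u := by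
  have hl1 : u ⬝ᵥ S.restrict z ≤ β * ∑ j, 1 * |u j| := by
    rw [dotProduct, Finset.mul_sum]
    refine Finset.sum_le_sum fun j _ => ?_
    calc u j * z j ≤ |u j| * |z j| := by rw [← abs_mul]; exact le_abs_self _
      _ ≤ |u j| * β := mul_le_mul_of_nonneg_left (hz j j.2) (abs_nonneg _)
      _ = β * (1 * |u j|) := by ring
  have hl2 : ∑ j, 1 * |u j| ≤ √S.card * l2norm u := by
    simpa [l2norm] using Real.sum_mul_le_sqrt_mul_sqrt Finset.univ (fun _ => (1 : ℝ)) (|u ·|)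
  rw [extendByZero_dotProduct, mul_assoc]
  exact hl1.trans (mul_le_mul_of_nonneg_left hl2 hβ)

end ZeroExtension

section ColSpaceProj

variable {ι κ R : Type*} [Fintype ι] [DecidableEq ι] [Fintype κ] [CommRing R]

/-- The orthogonal projection onto the column space of `A` if `Aᵀ A` is invertible; otherwise
`(Aᵀ A)⁻¹ = 0` and this is `0`. -/
noncomputable def colSpaceProj (A : Matrix κ ι R) : Matrix κ κ R := A * (Aᵀ * A)⁻¹ * Aᵀ

variable {A : Matrix κ ι R}

lemma colSpaceProj_mul_self (hA : IsUnit (Aᵀ * A)) : colSpaceProj A * A = A := by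
  rw [colSpaceProj, Matrix.mul_assoc _ Aᵀ, Matrix.mul_assoc,
    nonsing_inv_mul _ ((isUnit_iff_isUnit_det _).mp hA), Matrix.mul_one]

lemma transpose_mul_colSpaceProj (hA : IsUnit (Aᵀ * A)) : Aᵀ * colSpaceProj A = Aᵀ := by
  rw [colSpaceProj, ← Matrix.mul_assoc, ← Matrix.mul_assoc,
    mul_nonsing_inv _ ((isUnit_iff_isUnit_det _).mp hA), Matrix.one_mul]

lemma sub_colSpaceProj_mulVec_add_mulVec (hA : IsUnit (Aᵀ * A)) (y : κ → R) (w : ι → R) :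
    y + A *ᵥ w - colSpaceProj A *ᵥ (y + A *ᵥ w) = y - colSpaceProj A *ᵥ y := by
  rw [mulVec_add, mulVec_mulVec, colSpaceProj_mul_self hA]
  abel

lemma colSpaceProj_mulVec_dotProduct_sub (hA : IsUnit (Aᵀ * A)) (y : κ → R) :
    colSpaceProj A *ᵥ y ⬝ᵥ (y - colSpaceProj A *ᵥ y) = 0 := by
  have hr : Aᵀ *ᵥ (y - colSpaceProj A *ᵥ y) = 0 := by
    rw [mulVec_sub, mulVec_mulVec, transpose_mul_colSpaceProj hA, sub_self]
  have hP : colSpaceProj A *ᵥ y = A *ᵥ ((Aᵀ * A)⁻¹ *ᵥ (Aᵀ *ᵥ y)) := by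
    simp only [colSpaceProj, mulVec_mulVec, Matrix.mul_assoc]
  nth_rewrite 1 [hP]
  rw [dotProduct_comm, ← dotProduct_transpose_mulVec, hr, dotProduct_zero]

lemma dotProduct_self_sub_colSpaceProj (hA : IsUnit (Aᵀ * A)) (y : κ → R) :
    (y - colSpaceProj A *ᵥ y) ⬝ᵥ (y - colSpaceProj A *ᵥ y) =
      y ⬝ᵥ (y - colSpaceProj A *ᵥ y) := by
  rw [sub_dotProduct, colSpaceProj_mulVec_dotProduct_sub hA, sub_zero]

lemma dotProduct_self_eq_sub_colSpaceProj_add (hA : IsUnit (Aᵀ * A)) (y : κ → R) :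
    y ⬝ᵥ y = (y - colSpaceProj A *ᵥ y) ⬝ᵥ (y - colSpaceProj A *ᵥ y) +
      colSpaceProj A *ᵥ y ⬝ᵥ colSpaceProj A *ᵥ y := by
  have h := colSpaceProj_mulVec_dotProduct_sub hA y
  conv_lhs => rw [← sub_add_cancel y (colSpaceProj A *ᵥ y)]
  rw [add_dotProduct, dotProduct_add, dotProduct_add, h,
    dotProduct_comm (y - colSpaceProj A *ᵥ y) (colSpaceProj A *ᵥ y), h]
  ring

end ColSpaceProj

lemma mul_l2norm_le_l2norm_gram_mulVec {ι κ : Type*} [Fintype ι] [Fintype κ]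
    {A : Matrix κ ι ℝ} {δ : ℝ} (hA : ∀ u, (1 - δ) * (u ⬝ᵥ u) ≤ A *ᵥ u ⬝ᵥ A *ᵥ u)
    (u : ι → ℝ) : (1 - δ) * l2norm u ≤ l2norm ((Aᵀ * A) *ᵥ u) := by
  have h : (1 - δ) * l2norm u ^ 2 ≤ l2norm u * l2norm ((Aᵀ * A) *ᵥ u) :=
    calc (1 - δ) * l2norm u ^ 2 ≤ A *ᵥ u ⬝ᵥ A *ᵥ u := by rw [l2norm_sq]; exact hA u
      _ = u ⬝ᵥ (Aᵀ * A) *ᵥ u := by rw [← mulVec_mulVec, dotProduct_transpose_mulVec]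
      _ ≤ l2norm u * l2norm ((Aᵀ * A) *ᵥ u) := dotProduct_le_l2norm_mul_l2norm _ _
  rcases (l2norm_nonneg u).eq_or_lt with h0 | h0
  · rw [← h0, mul_zero]
    exact l2norm_nonneg _
  · nlinarith

lemma isSparse_of_support_subset_s11 {n K : ℕ} {S : Finset (Fin n)} {v : Fin n → ℝ}
    (hv : ∀ i ∉ S, v i = 0) (hS : S.card ≤ K) : IsSparse K v := by
  refine (Finset.card_le_card fun i hi => ?_).trans hS
  by_contra h
  exact (Finset.mem_filter.mp hi).2 (hv i h)

lemma mulVec_extendByZero {m n : ℕ} (Φ : Matrix (Fin m) (Fin n) ℝ) (S : Finset (Fin n))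
    (u : S → ℝ) :
    Φ *ᵥ extendByZero S u = colSub Φ S *ᵥ u := by
  funext i
  rw [mulVec, mulVec, dotProduct_comm, extendByZero_dotProduct, dotProduct_comm]
  rfl

namespace SatisfiesRIP

variable {m n K : ℕ} {Φ : Matrix (Fin m) (Fin n) ℝ} {δ : ℝ}

lemma lower (h : SatisfiesRIP Φ K δ) {v : Fin n → ℝ} (hv : IsSparse K v) :
    (1 - δ) * (v ⬝ᵥ v) ≤ Φ *ᵥ v ⬝ᵥ Φ *ᵥ v := by
  simpa only [l2norm_sq] using (h v hv).1

lemma upper (h : SatisfiesRIP Φ K δ) {v : Fin n → ℝ} (hv : IsSparse K v) :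
    Φ *ᵥ v ⬝ᵥ Φ *ᵥ v ≤ (1 + δ) * (v ⬝ᵥ v) := by
  simpa only [l2norm_sq] using (h v hv).2

lemma colSub_lower (h : SatisfiesRIP Φ K δ) {S : Finset (Fin n)} (hS : S.card ≤ K)
    (u : S → ℝ) : (1 - δ) * (u ⬝ᵥ u) ≤ colSub Φ S *ᵥ u ⬝ᵥ colSub Φ S *ᵥ u := by
  have := h.lower (isSparse_of_support_subset_s11 (fun _ => extendByZero_of_notMem u) hS)
  rwa [extendByZero_dotProduct_self, mulVec_extendByZero] at this

lemma colSub_upper (h : SatisfiesRIP Φ K δ) {S : Finset (Fin n)} (hS : S.card ≤ K)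
    (u : S → ℝ) : colSub Φ S *ᵥ u ⬝ᵥ colSub Φ S *ᵥ u ≤ (1 + δ) * (u ⬝ᵥ u) := by
  have := h.upper (isSparse_of_support_subset_s11 (fun _ => extendByZero_of_notMem u) hS)
  rwa [extendByZero_dotProduct_self, mulVec_extendByZero] at this

/-- Polarization: `4 ⟪Φa, Φb⟫ = ‖Φ(a+b)‖² - ‖Φ(a-b)‖²`, and `‖a ± b‖² = ‖a‖² + ‖b‖²`. -/
lemma two_mul_dotProduct_mulVec_le_s11 (h : SatisfiesRIP Φ K δ) {a b : Fin n → ℝ}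
    (hab : a ⬝ᵥ b = 0) {S : Finset (Fin n)} (ha : ∀ i ∉ S, a i = 0) (hb : ∀ i ∉ S, b i = 0)
    (hS : S.card ≤ K) : 2 * (Φ *ᵥ a ⬝ᵥ Φ *ᵥ b) ≤ δ * (a ⬝ᵥ a + b ⬝ᵥ b) := by
  have hp := h.upper (v := a + b) (isSparse_of_support_subset_s11
    (fun i hi => by simp [ha i hi, hb i hi]) hS)
  have hm := h.lower (v := a - b) (isSparse_of_support_subset_s11
    (fun i hi => by simp [ha i hi, hb i hi]) hS)
  simp only [mulVec_add, mulVec_sub, add_dotProduct, dotProduct_add, sub_dotProduct,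
    dotProduct_sub, dotProduct_comm b a, dotProduct_comm (Φ *ᵥ b) (Φ *ᵥ a), hab] at hp hm
  linarith

/-- Apply the polarization bound to `‖b‖ • a` and `‖a‖ • b`. -/
lemma dotProduct_mulVec_le_s11 (h : SatisfiesRIP Φ K δ) {a b : Fin n → ℝ}
    (hab : a ⬝ᵥ b = 0) {S : Finset (Fin n)} (ha : ∀ i ∉ S, a i = 0) (hb : ∀ i ∉ S, b i = 0)
    (hS : S.card ≤ K) : Φ *ᵥ a ⬝ᵥ Φ *ᵥ b ≤ δ * l2norm a * l2norm b := by
  have hscaled := h.two_mul_dotProduct_mulVec_le_s11 (a := l2norm b • a) (b := l2norm a • b)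
    (by simp [hab]) (fun i hi => by simp [ha i hi]) (fun i hi => by simp [hb i hi]) hS
  simp only [mulVec_smul, smul_dotProduct, dotProduct_smul, smul_eq_mul, ← l2norm_sq] at hscaled
  rcases (mul_nonneg (l2norm_nonneg a) (l2norm_nonneg b)).eq_or_lt with h0 | h0
  · rcases mul_eq_zero.mp h0.symm with h0 | h0 <;>
      simp [l2norm_eq_zero.mp h0]
  · nlinarith

lemma l2norm_colSub_transpose_mulVec_le (h : SatisfiesRIP Φ K δ) (hδ : 0 ≤ δ)
    {S S' : Finset (Fin n)} (hdisj : Disjoint S S') (hK : (S ∪ S').card ≤ K)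
    {y : Fin n → ℝ} (hy : ∀ i ∉ S', y i = 0) :
    l2norm ((colSub Φ S)ᵀ *ᵥ (Φ *ᵥ y)) ≤ δ * l2norm y := by
  set v := (colSub Φ S)ᵀ *ᵥ (Φ *ᵥ y)
  have hvy : extendByZero S v ⬝ᵥ y = 0 := by
    have : S.restrict y = 0 := funext fun j => hy j (Finset.disjoint_left.mp hdisj j.2)
    rw [extendByZero_dotProduct, this, dotProduct_zero]
  have key : l2norm v ^ 2 ≤ δ * l2norm v * l2norm y :=
    calc l2norm v ^ 2 = Φ *ᵥ extendByZero S v ⬝ᵥ Φ *ᵥ y := by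
          rw [l2norm_sq, mulVec_extendByZero, dotProduct_comm (colSub Φ S *ᵥ v),
            ← dotProduct_transpose_mulVec, transpose_transpose]
      _ ≤ δ * l2norm (extendByZero S v) * l2norm y :=
          h.dotProduct_mulVec_le_s11 hvy
            (fun i hi => extendByZero_of_notMem v fun hS => hi (Finset.mem_union_left _ hS))
            (fun i hi => hy i fun hS => hi (Finset.mem_union_right _ hS)) hK
      _ = δ * l2norm v * l2norm y := by rw [l2norm_extendByZero]
  rcases (l2norm_nonneg v).eq_or_lt with h0 | h0
  · rw [← h0]
    exact mul_nonneg hδ (l2norm_nonneg y)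
  · nlinarith

/-- `P (Φ y) = A u` with `(AᵀA) u = AᵀΦy`: near-orthogonality bounds `‖AᵀΦy‖`, and the RIP on `Λ`
then bounds `‖u‖` and `‖A u‖`. -/
lemma colSpaceProj_mulVec_dotProduct_self_le {K₃ K₄ : ℕ} {δ₃ δ₄ : ℝ}
    (h₃ : SatisfiesRIP Φ K₃ δ₃) (h₄ : SatisfiesRIP Φ K₄ δ₄) (hδ₃ : 0 ≤ δ₃) (hδ₄ : 0 ≤ δ₄)
    (hδ₄' : δ₄ < 1) {Λ S : Finset (Fin n)} (hΛ : Λ.card ≤ K₄) (hdisj : Disjoint Λ S)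
    (hK : (Λ ∪ S).card ≤ K₃) (hrank : IsUnit ((colSub Φ Λ)ᵀ * colSub Φ Λ))
    {y : Fin n → ℝ} (hy : ∀ i ∉ S, y i = 0) :
    colSpaceProj (colSub Φ Λ) *ᵥ (Φ *ᵥ y) ⬝ᵥ colSpaceProj (colSub Φ Λ) *ᵥ (Φ *ᵥ y) ≤
      (1 + δ₄) / (1 - δ₄) ^ 2 * δ₃ ^ 2 * l2norm y ^ 2 := by
  set A := colSub Φ Λ
  set v := Aᵀ *ᵥ (Φ *ᵥ y)
  set u := (Aᵀ * A)⁻¹ *ᵥ v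
  have hPy : colSpaceProj A *ᵥ (Φ *ᵥ y) = A *ᵥ u := by
    simp only [colSpaceProj, u, v, mulVec_mulVec, Matrix.mul_assoc]
  have hGu : (Aᵀ * A) *ᵥ u = v := by
    rw [mulVec_mulVec, mul_nonsing_inv _ ((isUnit_iff_isUnit_det _).mp hrank), one_mulVec]
  have hv : l2norm v ≤ δ₃ * l2norm y := h₃.l2norm_colSub_transpose_mulVec_le hδ₃ hdisj hK hy
  have hu : (1 - δ₄) * l2norm u ≤ l2norm v :=
    hGu ▸ mul_l2norm_le_l2norm_gram_mulVec (h₄.colSub_lower hΛ) u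
  have hu' : l2norm u ≤ δ₃ * l2norm y / (1 - δ₄) := by
    rw [le_div_iff₀ (sub_pos.mpr hδ₄')]
    linarith
  calc colSpaceProj A *ᵥ (Φ *ᵥ y) ⬝ᵥ colSpaceProj A *ᵥ (Φ *ᵥ y)
      ≤ (1 + δ₄) * l2norm u ^ 2 := by rw [hPy, l2norm_sq]; exact h₄.colSub_upper hΛ u
    _ ≤ (1 + δ₄) * (δ₃ * l2norm y / (1 - δ₄)) ^ 2 := by
        gcongr
        exact l2norm_nonneg u
    _ = (1 + δ₄) / (1 - δ₄) ^ 2 * δ₃ ^ 2 * l2norm y ^ 2 := by rw [div_pow]; ring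

lemma le_dotProduct_self_sub_colSpaceProj {K₁ K₃ K₄ : ℕ} {δ₁ δ₃ δ₄ : ℝ}
    (h₁ : SatisfiesRIP Φ K₁ δ₁) (h₃ : SatisfiesRIP Φ K₃ δ₃) (h₄ : SatisfiesRIP Φ K₄ δ₄)
    (hδ₃ : 0 ≤ δ₃) (hδ₄ : 0 ≤ δ₄) (hδ₄' : δ₄ < 1) {Λ S : Finset (Fin n)} (hS : S.card ≤ K₁)
    (hΛ : Λ.card ≤ K₄) (hdisj : Disjoint Λ S) (hK : (Λ ∪ S).card ≤ K₃)
    (hrank : IsUnit ((colSub Φ Λ)ᵀ * colSub Φ Λ)) (u : S → ℝ) :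
    (1 - δ₁ - (1 + δ₄) / (1 - δ₄) ^ 2 * δ₃ ^ 2) * l2norm u ^ 2 ≤
      (Φ *ᵥ extendByZero S u - colSpaceProj (colSub Φ Λ) *ᵥ (Φ *ᵥ extendByZero S u)) ⬝ᵥ
        (Φ *ᵥ extendByZero S u - colSpaceProj (colSub Φ Λ) *ᵥ (Φ *ᵥ extendByZero S u)) := by
  have hsupp : ∀ i ∉ S, extendByZero S u i = 0 := fun _ => extendByZero_of_notMem u
  have hlow : (1 - δ₁) * l2norm u ^ 2 ≤ Φ *ᵥ extendByZero S u ⬝ᵥ Φ *ᵥ extendByZero S u := by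
    rw [l2norm_sq, ← extendByZero_dotProduct_self]
    exact h₁.lower (isSparse_of_support_subset_s11 hsupp hS)
  have hproj := h₃.colSpaceProj_mulVec_dotProduct_self_le h₄ hδ₃ hδ₄ hδ₄' hΛ hdisj hK hrank hsupp
  rw [l2norm_extendByZero] at hproj
  have hpyth := dotProduct_self_eq_sub_colSpaceProj_add hrank (Φ *ᵥ extendByZero S u)
  linarith

end SatisfiesRIP

lemma mul_le_of_mul_sq_le_mul {c X b : ℝ} (hX : 0 ≤ X) (hb : 0 ≤ b) (h : c * X ^ 2 ≤ b * X) :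
    c * X ≤ b := by
  rcases hX.eq_or_lt with h0 | h0
  · rw [← h0, mul_zero]
    exact hb
  · exact le_of_mul_le_mul_right (by rwa [mul_assoc, ← sq]) h0

lemma l2norm_restrict {ι : Type*} (S : Finset ι) (x : ι → ℝ) :
    l2norm (S.restrict x) = √(∑ i ∈ S, x i ^ 2) := by
  rw [l2norm, ← Finset.sum_coe_sort S (fun i => x i ^ 2)]
  rfl

theorem beta1_lower_bound_general {m n : ℕ} (Φ : Matrix (Fin m) (Fin n) ℝ)
    (x : Fin n → ℝ) (K N k l : ℕ) (hlK : l < K)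
    (T Λ : Finset (Fin n)) (hT : T = Finset.univ.filter fun i => x i ≠ 0)
    (hTK : T.card = K) (hΛ : Λ.card = N * k) (hl : (T ∩ Λ).card = l)
    (hrank : IsUnit ((colSub Φ Λ)ᵀ * colSub Φ Λ))
    (r : Fin m → ℝ)
    (hr : r = Φ.mulVec x -
      (colSub Φ Λ * ((colSub Φ Λ)ᵀ * colSub Φ Λ)⁻¹ * (colSub Φ Λ)ᵀ).mulVec (Φ.mulVec x))
    (hne : (T \ Λ).Nonempty)
    (δ₁ δ₃ δ₄ : ℝ)
    (hRIP₁ : SatisfiesRIP Φ (K - l) δ₁)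
    (hδ₃ : 0 ≤ δ₃) (hRIP₃ : SatisfiesRIP Φ (N * k + K - l) δ₃)
    (hδ₄ : 0 ≤ δ₄) (hδ₄' : δ₄ < 1) (hRIP₄ : SatisfiesRIP Φ (N * k) δ₄) :
    (T \ Λ).sup' hne (fun j => |Φᵀ.mulVec r j|) ≥
      (1 - δ₁ - (1 + δ₄) / (1 - δ₄) ^ 2 * δ₃ ^ 2) *
        Real.sqrt (∑ i ∈ T \ Λ, x i ^ 2) / Real.sqrt ((K : ℝ) - l) := by
  set β := (T \ Λ).sup' hne (fun j => |Φᵀ.mulVec r j|)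
  set u₁ := (T \ Λ).restrict x
  set x₁ := extendByZero (T \ Λ) u₁
  have hsupp : ∀ i ∉ T, x i = 0 := by simp [hT]
  have hcard : (T \ Λ).card = K - l := by
    have := Finset.card_sdiff_add_card_inter T Λ
    omega
  have hβ : ∀ j ∈ T \ Λ, |(Φᵀ *ᵥ r) j| ≤ β := fun j hj =>
    Finset.le_sup' (fun j => |(Φᵀ *ᵥ r) j|) hj
  have hβ0 : 0 ≤ β := (abs_nonneg _).trans (hβ _ hne.choose_spec)
  have hrx₁ : r = Φ *ᵥ x₁ - colSpaceProj (colSub Φ Λ) *ᵥ (Φ *ᵥ x₁) := by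
    have hΦx : Φ *ᵥ x = Φ *ᵥ x₁ + colSub Φ Λ *ᵥ Λ.restrict x := by
      rw [← mulVec_extendByZero, ← mulVec_add,
        extendByZero_restrict_sdiff_add_extendByZero_restrict hsupp]
    rw [hr, hΦx]
    exact sub_colSpaceProj_mulVec_add_mulVec hrank _ _
  have hlow := hRIP₁.le_dotProduct_self_sub_colSpaceProj hRIP₃ hRIP₄ hδ₃ hδ₄ hδ₄' hcard.le hΛ.le
    Finset.disjoint_sdiff (by rw [Finset.card_union_of_disjoint Finset.disjoint_sdiff]; omega)
    hrank u₁
  rw [← hrx₁] at hlow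
  have hup : r ⬝ᵥ r ≤ β * √((K : ℝ) - l) * l2norm u₁ :=
    calc r ⬝ᵥ r = x₁ ⬝ᵥ Φᵀ *ᵥ r := by
          rw [dotProduct_transpose_mulVec, hrx₁, dotProduct_comm _ (Φ *ᵥ x₁)]
          exact dotProduct_self_sub_colSpaceProj hrank _
      _ ≤ β * √((T \ Λ).card : ℝ) * l2norm u₁ := extendByZero_dotProduct_le hβ0 hβ u₁
      _ = β * √((K : ℝ) - l) * l2norm u₁ := by rw [hcard, Nat.cast_sub hlK.le]
  have hKl : (0 : ℝ) < K - l := sub_pos.mpr (by exact_mod_cast hlK)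
  rw [← l2norm_restrict, ge_iff_le, div_le_iff₀ (Real.sqrt_pos.mpr hKl)]
  exact mul_le_of_mul_sq_le_mul (l2norm_nonneg u₁) (by positivity) (hlow.trans hup)

theorem beta1_lower_bound {m n : ℕ} (Φ : Matrix (Fin m) (Fin n) ℝ)
    (x : Fin n → ℝ) (K N k l : ℕ) (hN : 0 < N) (hlK : l < K)
    (T Λ : Finset (Fin n)) (hT : T = Finset.univ.filter fun i => x i ≠ 0)
    (hTK : T.card = K) (hΛ : Λ.card = N * k) (hl : (T ∩ Λ).card = l)
    (hrank : IsUnit ((colSub Φ Λ)ᵀ * colSub Φ Λ))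
    (r : Fin m → ℝ)
    (hr : r = Φ.mulVec x -
      (colSub Φ Λ * ((colSub Φ Λ)ᵀ * colSub Φ Λ)⁻¹ * (colSub Φ Λ)ᵀ).mulVec (Φ.mulVec x))
    (hne : (T \ Λ).Nonempty)
    (δ₁ δ₃ δ₄ : ℝ)
    (hδ₁ : 0 ≤ δ₁) (hδ₁' : δ₁ < 1) (hRIP₁ : SatisfiesRIP Φ (K - l) δ₁)
    (hδ₃ : 0 ≤ δ₃) (hδ₃' : δ₃ < 1) (hRIP₃ : SatisfiesRIP Φ (N * k + K - l) δ₃)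
    (hδ₄ : 0 ≤ δ₄) (hδ₄' : δ₄ < 1) (hRIP₄ : SatisfiesRIP Φ (N * k) δ₄) :
    (T \ Λ).sup' hne (fun j => |Φᵀ.mulVec r j|) ≥
      (1 - δ₁ - (1 + δ₄) / (1 - δ₄) ^ 2 * δ₃ ^ 2) *
        Real.sqrt (∑ i ∈ T \ Λ, x i ^ 2) / Real.sqrt ((K : ℝ) - l) :=
  beta1_lower_bound_general Φ x K N k l hlK T Λ hT hTK hΛ hl hrank r hr hne δ₁ δ₃ δ₄ hRIP₁ hδ₃ hRIP₃
    hδ₄ hδ₄' hRIP₄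
end
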